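/- The kernel of the homomorphism φ : U(1) × SU(2) × SU(3) → SU(5), φ(α, g, h) = block diag(α³·g, α⁻²·h), namely the subgroup {(α, α⁻³·1₂, α²·1₃) : α⁶ = 1}, is a cyclic group of order 6, i.e. it is isomorphic to ℤ/6ℤ. -/

import Mathlib

open Matrix

noncomputable section

/-- The special unitary group `SU(n)`: `n × n` complex unitary matrices of determinant 1,
as a subgroup of the unitary group. -/
def SU (n : ℕ) : Subgroup (Matrix.unitaryGroup (Fin n) ℂ) where
  carrier := {U | (U : Matrix (Fin n) (Fin n) ℂ).det = 1}
  mul_mem' := by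
    intro a b ha hb
    simp only [Set.mem_setOf_eq, Matrix.UnitaryGroup.mul_val, Matrix.det_mul] at *
    rw [ha, hb, mul_one]
  one_mem' := by simp
  inv_mem' := by
    intro a ha
    simp only [Set.mem_setOf_eq, Matrix.UnitaryGroup.inv_val] at *
    rw [Matrix.star_eq_conjTranspose, Matrix.det_conjTranspose, ha, star_one]

/-- The underlying matrix of an element of `SU(n)`. -/
def suMat {n : ℕ} (g : SU n) : Matrix (Fin n) (Fin n) ℂ := g.1.1

/-- The Standard Model gauge group `U(1) × SU(2) × SU(3)`, where `U(1)` is the circle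
group `unitary ℂ = {α : ℂ | |α| = 1}`. -/
abbrev GSM : Type := unitary ℂ × SU 2 × SU 3

/-- The 5×5 block diagonal matrix with upper-left 2×2 block `α³ • g` and lower-right
3×3 block `α⁻² • h`, for `(α, g, h)` in the Standard Model gauge group. -/
def phiMat (x : GSM) : Matrix (Fin 5) (Fin 5) ℂ :=
  Matrix.reindex finSumFinEquiv finSumFinEquiv
    (Matrix.fromBlocks (((x.1 : ℂ) ^ 3) • suMat x.2.1) 0 0
      ((((x.1 : ℂ) ^ 2)⁻¹) • suMat x.2.2))

lemma unitary_star_mul (α : unitary ℂ) : star (α : ℂ) * α = 1 := α.2.1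

lemma unitary_ne_zero (α : unitary ℂ) : (α : ℂ) ≠ 0 := by
  intro h
  have := α.2.1
  rw [h, mul_zero] at this
  exact zero_ne_one this

lemma su_det {n : ℕ} (g : SU n) : (suMat g).det = 1 := g.2

lemma su_star_mul {n : ℕ} (g : SU n) : star (suMat g) * suMat g = 1 := g.1.2.1

lemma reindex_mul (M N : Matrix (Fin 2 ⊕ Fin 3) (Fin 2 ⊕ Fin 3) ℂ) :
    (Matrix.reindex finSumFinEquiv finSumFinEquiv M) *
      (Matrix.reindex finSumFinEquiv finSumFinEquiv N)
    = Matrix.reindex finSumFinEquiv finSumFinEquiv (M * N) := by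
  simp [Matrix.reindex_apply, Matrix.submatrix_mul_equiv]

lemma reindex_star (M : Matrix (Fin 2 ⊕ Fin 3) (Fin 2 ⊕ Fin 3) ℂ) :
    star (Matrix.reindex finSumFinEquiv finSumFinEquiv M)
    = Matrix.reindex finSumFinEquiv finSumFinEquiv (star M) := by
  simp [Matrix.reindex_apply, Matrix.star_eq_conjTranspose, Matrix.conjTranspose_submatrix]

lemma reindex_one :
    (Matrix.reindex finSumFinEquiv finSumFinEquiv
      (1 : Matrix (Fin 2 ⊕ Fin 3) (Fin 2 ⊕ Fin 3) ℂ)) = 1 := by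
  simp [Matrix.reindex_apply, Matrix.submatrix_one_equiv]

lemma phiMat_mem_unitary (x : GSM) : phiMat x ∈ Matrix.unitaryGroup (Fin 5) ℂ := by
  rw [Matrix.mem_unitaryGroup_iff']
  obtain ⟨α, g, h⟩ := x
  have hα : star (α : ℂ) * α = 1 := α.2.1
  have hα' : (α : ℂ) ≠ 0 := unitary_ne_zero α
  rw [phiMat, reindex_star, reindex_mul, ← reindex_one]
  congr 1
  rw [Matrix.star_eq_conjTranspose, Matrix.fromBlocks_conjTranspose]
  simp only [Matrix.conjTranspose_zero, Matrix.fromBlocks_multiply, Matrix.zero_mul,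
    Matrix.mul_zero, add_zero, zero_add]
  have hA : ((α:ℂ) ^ 3 • suMat g)ᴴ * ((α:ℂ) ^ 3 • suMat g) = 1 := by
    rw [Matrix.conjTranspose_smul, Matrix.smul_mul, Matrix.mul_smul, smul_smul,
      ← Matrix.star_eq_conjTranspose, su_star_mul g,
      show star ((α:ℂ) ^ 3) * (α:ℂ) ^ 3 = 1 by rw [star_pow, ← mul_pow, hα, one_pow], one_smul]
  have hD : (((α:ℂ) ^ 2)⁻¹ • suMat h)ᴴ * (((α:ℂ) ^ 2)⁻¹ • suMat h) = 1 := by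
    rw [Matrix.conjTranspose_smul, Matrix.smul_mul, Matrix.mul_smul, smul_smul,
      ← Matrix.star_eq_conjTranspose, su_star_mul h,
      show star (((α:ℂ) ^ 2)⁻¹) * ((α:ℂ) ^ 2)⁻¹ = 1 by
        rw [star_inv₀, ← mul_inv, star_pow, ← mul_pow, hα, one_pow, inv_one], one_smul]
  rw [hA, hD, Matrix.fromBlocks_one]

lemma phiMat_det (x : GSM) : (phiMat x).det = 1 := by
  obtain ⟨α, g, h⟩ := x
  have hα' : (α : ℂ) ≠ 0 := unitary_ne_zero α
  rw [phiMat, Matrix.det_reindex_self,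
    Matrix.det_fromBlocks_zero₂₁, Matrix.det_smul, Matrix.det_smul, su_det, su_det]
  simp only [Fintype.card_fin, mul_one, inv_pow, ← pow_mul]
  norm_num
  exact mul_inv_cancel₀ (pow_ne_zero _ hα')

set_option maxRecDepth 4000 in
def phiFun (x : GSM) : SU 5 :=
  ⟨⟨phiMat x, phiMat_mem_unitary x⟩, show (phiMat x).det = 1 from phiMat_det x⟩

lemma phiFun_mul (x y : GSM) : phiFun (x * y) = phiFun x * phiFun y := by
  apply Subtype.ext
  apply Subtype.ext
  show phiMat (x * y) = phiMat x * phiMat y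
  rw [phiMat, phiMat, phiMat, reindex_mul]
  congr 1
  rw [Matrix.fromBlocks_multiply]
  have h1 : suMat (x.2.1 * y.2.1) = suMat x.2.1 * suMat y.2.1 := rfl
  have h2 : suMat (x.2.2 * y.2.2) = suMat x.2.2 * suMat y.2.2 := rfl
  show Matrix.fromBlocks ((((x.1 * y.1 : unitary ℂ) : ℂ)) ^ 3 • suMat ((x * y).2.1)) 0 0
      (((((x.1 * y.1 : unitary ℂ) : ℂ)) ^ 2)⁻¹ • suMat ((x * y).2.2)) = _
  have h3 : (x * y).2.1 = x.2.1 * y.2.1 := rfl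
  have h4 : (x * y).2.2 = x.2.2 * y.2.2 := rfl
  rw [h3, h4, h1, h2]
  simp only [Matrix.zero_mul, Matrix.mul_zero, add_zero, zero_add, Matrix.smul_mul,
    Matrix.mul_smul, smul_smul, mul_pow, mul_inv, MulMemClass.coe_mul, smul_zero]
  rw [mul_comm ((y.1:ℂ) ^ 3), mul_comm (((y.1:ℂ) ^ 2)⁻¹)]

def phiHom : GSM →* SU 5 := MonoidHom.mk' phiFun phiFun_mul

lemma suMat_injective {n : ℕ} : Function.Injective (suMat (n := n)) :=
  fun _ _ h => Subtype.ext (Subtype.ext h)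

lemma mem_ker_iff_phiMat (x : GSM) : x ∈ phiHom.ker ↔ phiMat x = 1 := by
  rw [MonoidHom.mem_ker]
  constructor
  · intro h
    have := congrArg suMat h
    exact this
  · intro h
    apply Subtype.ext
    apply Subtype.ext
    exact h

lemma phiMat_eq_one_iff (x : GSM) :
    phiMat x = 1 ↔ ((x.1 : ℂ) ^ 3 • suMat x.2.1 = 1 ∧ ((x.1 : ℂ) ^ 2)⁻¹ • suMat x.2.2 = 1) := by
  rw [phiMat, ← reindex_one, Equiv.apply_eq_iff_eq, ← Matrix.fromBlocks_one,
    Matrix.fromBlocks_inj]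
  tauto

lemma scalar_mem_unitary (n : ℕ) (c : ℂ) (hc : star c * c = 1) :
    c • (1 : Matrix (Fin n) (Fin n) ℂ) ∈ Matrix.unitaryGroup (Fin n) ℂ := by
  rw [Matrix.mem_unitaryGroup_iff', star_smul, star_one, Matrix.smul_mul, Matrix.mul_smul,
    smul_smul, one_mul, hc, one_smul]

lemma scalar_det (n : ℕ) (c : ℂ) :
    (c • (1 : Matrix (Fin n) (Fin n) ℂ)).det = c ^ n := by
  rw [Matrix.det_smul, Matrix.det_one, Fintype.card_fin, mul_one]

lemma mem_ker_iff (x : GSM) : x ∈ phiHom.ker ↔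
    ∃ α : unitary ℂ, (α : ℂ) ^ 6 = 1 ∧ x.1 = α ∧
      suMat x.2.1 = (((α : ℂ) ^ 3)⁻¹) • (1 : Matrix (Fin 2) (Fin 2) ℂ) ∧
      suMat x.2.2 = ((α : ℂ) ^ 2) • (1 : Matrix (Fin 3) (Fin 3) ℂ) := by
  rw [mem_ker_iff_phiMat, phiMat_eq_one_iff]
  constructor
  · rintro ⟨h1, h2⟩
    refine ⟨x.1, ?_, rfl, ?_, ?_⟩
    · have hg : suMat x.2.1 = ((x.1 : ℂ) ^ 3)⁻¹ • 1 := by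
        rw [← h1, smul_smul, inv_mul_cancel₀ (pow_ne_zero _ (unitary_ne_zero x.1)), one_smul]
      have := su_det x.2.1
      rw [hg, scalar_det, ← inv_pow, ← pow_mul] at this
      norm_num at this
      exact this
    · rw [← h1, smul_smul, inv_mul_cancel₀ (pow_ne_zero _ (unitary_ne_zero x.1)), one_smul]
    · rw [← h2, smul_smul, mul_inv_cancel₀ (pow_ne_zero _ (unitary_ne_zero x.1)), one_smul]
  · rintro ⟨α, hα6, hx1, hg, hh⟩
    have hα : (α : ℂ) ≠ 0 := unitary_ne_zero α
    rw [hx1, hg, hh]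
    constructor
    · rw [smul_smul, mul_inv_cancel₀ (pow_ne_zero _ hα), one_smul]
    · rw [smul_smul, inv_mul_cancel₀ (pow_ne_zero _ hα), one_smul]

def kerToRoots : phiHom.ker →* rootsOfUnity 6 ℂ where
  toFun x := ⟨Unitary.toUnits x.1.1, by
    rw [mem_rootsOfUnity]
    obtain ⟨α, hα6, hx1, -, -⟩ := (mem_ker_iff x.1).mp x.2
    apply Units.ext
    push_cast
    show ((x.1.1 : ℂ)) ^ 6 = 1
    rw [hx1]
    exact hα6⟩
  map_one' := by apply Subtype.ext; apply Units.ext; rfl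
  map_mul' x y := by apply Subtype.ext; apply Units.ext; rfl

lemma kerToRoots_injective : Function.Injective kerToRoots := by
  intro x y hxy
  have h1 : x.1.1 = y.1.1 :=
    Unitary.toUnits_injective (congrArg (fun z => z.1) hxy)
  obtain ⟨α, hα6, hx1, hg, hh⟩ := (mem_ker_iff x.1).mp x.2
  obtain ⟨β, hβ6, hy1, hg', hh'⟩ := (mem_ker_iff y.1).mp y.2
  have hab : α = β := by rw [← hx1, ← hy1, h1]
  apply Subtype.ext
  have h2 : x.1.2.1 = y.1.2.1 := suMat_injective (by rw [hg, hg', hab])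
  have h3 : x.1.2.2 = y.1.2.2 := suMat_injective (by rw [hh, hh', hab])
  exact Prod.ext h1 (Prod.ext h2 h3)

lemma kerToRoots_surjective : Function.Surjective kerToRoots := by
  intro ζ
  set a : ℂ := (ζ.1 : ℂ) with ha_def
  have ha6 : a ^ 6 = 1 := by
    have := ζ.2
    rw [mem_rootsOfUnity] at this
    have h := Units.ext_iff.mp this
    push_cast at h
    exact h
  have hns : Complex.normSq a = 1 := by
    have h6 : Complex.normSq a ^ 6 = 1 := by
      rw [← map_pow, ha6, Complex.normSq_one]
    have hnn : 0 ≤ Complex.normSq a := Complex.normSq_nonneg a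
    rcases (pow_eq_one_iff_cases.mp h6) with h | h | h
    · norm_num at h
    · exact h
    · nlinarith [h.1]
  have hstar : star a * a = 1 := by
    rw [Complex.star_def, mul_comm, Complex.mul_conj, hns]
    norm_num
  have haU : a ∈ unitary ℂ := ⟨hstar, by rw [mul_comm] at hstar; exact hstar⟩
  set α : unitary ℂ := ⟨a, haU⟩ with hα_def
  have hα : (α : ℂ) ≠ 0 := unitary_ne_zero α
  refine ⟨⟨(α, ⟨⟨((α : ℂ) ^ 3)⁻¹ • 1, scalar_mem_unitary 2 _ ?_⟩,
      show (((α : ℂ) ^ 3)⁻¹ • (1 : Matrix (Fin 2) (Fin 2) ℂ)).det = 1 from ?_⟩,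
      ⟨⟨((α : ℂ) ^ 2) • 1, scalar_mem_unitary 3 _ ?_⟩,
      show (((α : ℂ) ^ 2) • (1 : Matrix (Fin 3) (Fin 3) ℂ)).det = 1 from ?_⟩), ?_⟩, ?_⟩
  · rw [star_inv₀, ← mul_inv, star_pow, ← mul_pow, hstar, one_pow, inv_one]
  · rw [scalar_det, ← inv_pow, ← pow_mul]
    norm_num [ha6]
    exact ha6
  · rw [star_pow, ← mul_pow, hstar, one_pow]
  · rw [scalar_det, ← pow_mul]
    norm_num [ha6]
    exact ha6
  · rw [mem_ker_iff]
    exact ⟨α, ha6, rfl, rfl, rfl⟩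
  · apply Subtype.ext
    apply Units.ext
    rfl

/-- the kernel of `φ : U(1) × SU(2) × SU(3) → SU(5)`,
`φ(α,g,h) = blockdiag(α³g, α⁻²h)`, namely `{(α, α⁻³·1₂, α²·1₃) : α⁶ = 1}`,
is a cyclic group of order 6, i.e. isomorphic to `ℤ/6ℤ`. -/
theorem su5_phi_kernel_isomorphic_zmod6 :
    ∃ φ : GSM →* SU 5,
      (∀ x : GSM, suMat (φ x) = phiMat x) ∧
      (∀ x : GSM, x ∈ φ.ker ↔
        ∃ α : unitary ℂ, (α : ℂ) ^ 6 = 1 ∧ x.1 = α ∧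
          suMat x.2.1 = (((α : ℂ) ^ 3)⁻¹) • (1 : Matrix (Fin 2) (Fin 2) ℂ) ∧
          suMat x.2.2 = ((α : ℂ) ^ 2) • (1 : Matrix (Fin 3) (Fin 3) ℂ)) ∧
      Nonempty (φ.ker ≃* Multiplicative (ZMod 6)) := by
  refine ⟨phiHom, fun x => rfl, mem_ker_iff, ?_⟩
  have e : phiHom.ker ≃* rootsOfUnity 6 ℂ :=
    MulEquiv.ofBijective kerToRoots ⟨kerToRoots_injective, kerToRoots_surjective⟩
  have hc : IsCyclic phiHom.ker := isCyclic_of_surjective e.symm e.symm.surjective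
  have hcard : Nat.card phiHom.ker = Nat.card (Multiplicative (ZMod 6)) := by
    rw [Nat.card_congr e.toEquiv, Complex.card_rootsOfUnity,
      Nat.card_eq_fintype_card]
    rfl
  exact ⟨mulEquivOfCyclicCardEq hcard⟩
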